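/- arXiv:1103.2177 — 6 statements merged into one kernel-verified Lean document; each statement's English description precedes it below -/
import Mathlib

section
/- Let a_1, ..., a_n be positive real numbers and σ² ≥ 0. Define c_i = a_i / (Σ_{j≠i} a_j + σ²). Then for any positive integer m, at most m of the c_i can be strictly greater than 1/m. -/
/-! If base station `i` has SINR above `1/m`, then `m a_i` exceeds its interference
`∑_{j ≠ i} a_j + σ²`, so `a_i` is more than a `1/(m+1)` share of the total received power.
At most `m` stations can each hold more than a `1/(m+1)` share of a total. -/

open Finset

theorem card_lt_of_forall_sum_lt_mul {ι : Type*} {s : Finset ι} (hs : s.Nonempty)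
    {a : ι → ℝ} (ha : ∀ i ∈ s, 0 ≤ a i) {k : ℝ} (h : ∀ i ∈ s, ∑ j ∈ s, a j < k * a i) :
    (#s : ℝ) < k := by
  have hsum : (#s : ℝ) * ∑ j ∈ s, a j < k * ∑ j ∈ s, a j := by
    simpa only [sum_const, nsmul_eq_mul, mul_sum] using sum_lt_sum_of_nonempty hs h
  exact lt_of_mul_lt_mul_right hsum (sum_nonneg ha)

theorem sum_lt_add_one_mul_of_inv_lt_div {ι : Type*} [Fintype ι] [DecidableEq ι]
    {a : ι → ℝ} (ha : ∀ j, 0 ≤ a j) {σ2 : ℝ} (hσ : 0 ≤ σ2) {m : ℝ} (hm : 0 < m) {i : ι}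
    (h : 1 / m < a i / ((∑ j ∈ univ.erase i, a j) + σ2)) :
    ∑ j, a j < (m + 1) * a i := by
  set D := (∑ j ∈ univ.erase i, a j) + σ2
  have hD_nonneg : 0 ≤ D := add_nonneg (sum_nonneg fun j _ => ha j) hσ
  -- `a i / 0 = 0` in Lean, which cannot exceed `1 / m > 0`.
  have hD_pos : 0 < D := by
    refine hD_nonneg.lt_of_ne fun hD => ?_
    rw [← hD, div_zero] at h
    exact (one_div_pos.mpr hm).not_gt h
  have hD_lt : D < m * a i := by
    rwa [div_lt_div_iff₀ hm hD_pos, one_mul, mul_comm] at h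
  calc ∑ j, a j = a i + ∑ j ∈ univ.erase i, a j := (add_sum_erase _ _ (mem_univ i)).symm
    _ ≤ a i + D := by simp only [D]; linarith
    _ < (m + 1) * a i := by linarith

theorem sinr_counting (n : ℕ) (a : Fin n → ℝ) (ha : ∀ i, 0 < a i)
    (σ2 : ℝ) (hσ : 0 ≤ σ2) (c : Fin n → ℝ)
    (hc : ∀ i, c i = a i / ((∑ j ∈ Finset.univ.erase i, a j) + σ2))
    (m : ℕ) (hm : 0 < m) :
    (Finset.univ.filter (fun i => 1 / (m : ℝ) < c i)).card ≤ m := by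
  set S := Finset.univ.filter (fun i => 1 / (m : ℝ) < c i)
  obtain hS | hS := S.eq_empty_or_nonempty
  · simp [hS]
  have ha_nonneg : ∀ j, 0 ≤ a j := fun j => (ha j).le
  have hshare : ∀ i ∈ S, ∑ j ∈ S, a j < ((m : ℝ) + 1) * a i := fun i hi =>
    calc ∑ j ∈ S, a j ≤ ∑ j, a j := sum_le_univ_sum_of_nonneg ha_nonneg
      _ < ((m : ℝ) + 1) * a i := sum_lt_add_one_mul_of_inv_lt_div ha_nonneg hσ
          (Nat.cast_pos.mpr hm) (hc i ▸ (mem_filter.mp hi).2)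
  have hcard : (#S : ℝ) < m + 1 := card_lt_of_forall_sum_lt_mul hS (fun j _ => ha_nonneg j) hshare
  exact_mod_cast Nat.lt_succ_iff.mp (mod_cast hcard)
end

section
/- Let a_1, ..., a_n be positive reals and b_i = a_i / (Σ_{j≠i} a_j). Then at most m of the b_i can be strictly greater than 1/m, for any positive integer m. -/
/-!
Let `T = ∑ j, a j`. Since `∑_{j ≠ i} a j = T - a i`, the inequality `1 / m < b i` says
`T < (m + 1) * a i`: every such `a i` carries more than a `1 / (m + 1)` share of the total.
Shares of a nonnegative total add up to at most `1`, so there can be at most `m` of them.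
-/

open Finset

theorem Finset.card_filter_sum_div_succ_lt_le {ι : Type*} (s : Finset ι) (f : ι → ℝ)
    (hf : ∀ i ∈ s, 0 ≤ f i) (m : ℕ) :
    #{i ∈ s | (∑ j ∈ s, f j) / (m + 1) < f i} ≤ m := by
  set T := ∑ j ∈ s, f j
  set F := {i ∈ s | T / (m + 1) < f i}
  by_contra! hcard
  have hF : F.Nonempty := card_pos.mp (by omega)
  have hT : 0 ≤ T := sum_nonneg hf
  have hsum_F_le : ∑ i ∈ F, f i ≤ T :=
    sum_le_sum_of_subset_of_nonneg (filter_subset _ s) fun i hi _ => hf i hi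
  have hlt : #F * (T / (m + 1)) < ∑ i ∈ F, f i := by
    rw [← nsmul_eq_mul, ← sum_const]
    exact sum_lt_sum_of_nonempty hF fun i hi => (mem_filter.mp hi).2
  have hcard' : (m + 1 : ℝ) ≤ #F := by exact_mod_cast hcard
  have hT_le : T ≤ #F * (T / (m + 1)) := calc
    T = (m + 1) * (T / (m + 1)) := by field_simp
    _ ≤ #F * (T / (m + 1)) := by gcongr
  linarith

theorem lt_of_one_div_lt_div_sub {r x T : ℝ} (hr : 0 < r) (hx : 0 ≤ x)
    (h : 1 / r < x / (T - x)) : T / (r + 1) < x := by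
  -- this also rules out `T = x`, where `x / (T - x)` is the junk value `0`
  have hden : 0 < T - x := by
    by_contra! hle
    linarith [one_div_pos.mpr hr, div_nonpos_of_nonneg_of_nonpos hx hle]
  rw [div_lt_div_iff₀ hr hden] at h
  rw [div_lt_iff₀ (by positivity)]
  linarith

theorem sir_counting (n : ℕ) (a : Fin n → ℝ) (ha : ∀ i, 0 < a i)
    (b : Fin n → ℝ)
    (hb : ∀ i, b i = a i / (∑ j ∈ Finset.univ.erase i, a j))
    (m : ℕ) (hm : 0 < m) :
    (Finset.univ.filter (fun i => 1 / (m : ℝ) < b i)).card ≤ m := by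
  calc #{i | 1 / (m : ℝ) < b i}
      ≤ #{i | (∑ j, a j) / (m + 1) < a i} := by
        refine card_le_card (monotone_filter_right _ fun i _ hi => ?_)
        rw [hb, sum_erase_eq_sub (mem_univ i)] at hi
        exact lt_of_one_div_lt_div_sub (by exact_mod_cast hm) (ha i).le hi
    _ ≤ m := card_filter_sum_div_succ_lt_le _ _ (fun i _ => (ha i).le) m
end

section
/- For α > 2 and s > 0, the integral ∫_0^∞ 2π r (1 − 1/(1 + s·r^{−α})) dr equals s^{2/α} · C(α), where C(α) = 2π² csc(2π/α) / α. -/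
/-!
Write `a = 2 / α`. Since `1 - 1 / (1 + s r^(-α)) = s / (s + r^α)`, the substitution `t = r^α`
followed by `t ↦ s t` turns the integral into `(2π s^a / α) ∫₀^∞ t^(a-1) / (1 + t) dt`. The further
substitution `t = x / (1 - x)` identifies the last integral with the beta integral
`B(a, 1 - a) = Γ(a) Γ(1 - a)`, which is `π / sin (π a)` by Euler's reflection formula.
-/

open Real MeasureTheory Set

lemma integral_rpow_mul_one_sub_rpow {u v : ℝ} (hu : 0 < u) (hv : 0 < v) :
    ∫ x in (0 : ℝ)..1, x ^ (u - 1) * (1 - x) ^ (v - 1) = ProbabilityTheory.beta u v := by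
  have hcast : Complex.betaIntegral u v
      = ((∫ x in (0 : ℝ)..1, x ^ (u - 1) * (1 - x) ^ (v - 1) : ℝ) : ℂ) := by
    rw [← intervalIntegral.integral_ofReal, Complex.betaIntegral]
    refine intervalIntegral.integral_congr fun x hx => ?_
    rw [uIcc_of_le zero_le_one] at hx
    simp only [Complex.ofReal_mul, Complex.ofReal_cpow hx.1,
      Complex.ofReal_cpow (sub_nonneg.2 hx.2)]
    push_cast
    rfl
  rw [ProbabilityTheory.beta_eq_betaIntegralReal u v hu hv, hcast, Complex.ofReal_re]

lemma integral_Ioi_eq_integral_Ioo_div_one_sub {E : Type*} [NormedAddCommGroup E]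
    [NormedSpace ℝ E] (g : ℝ → E) :
    ∫ t in Ioi 0, g t = ∫ x in Ioo 0 1, ((1 - x) ^ 2)⁻¹ • g (x / (1 - x)) := by
  have himage : (fun x : ℝ => x / (1 - x)) '' Ioo 0 1 = Ioi 0 := by
    ext t
    constructor
    · rintro ⟨x, ⟨hx0, hx1⟩, rfl⟩
      exact div_pos hx0 (sub_pos.2 hx1)
    · intro (ht : 0 < t)
      refine ⟨t / (1 + t), ⟨by positivity, ?_⟩, ?_⟩
      · rw [div_lt_one (by positivity)]; linarith
      · have : (1 : ℝ) + t ≠ 0 := by positivity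
        field_simp
        ring
  have hderiv : ∀ x ∈ Ioo (0 : ℝ) 1,
      HasDerivWithinAt (fun x : ℝ => x / (1 - x)) ((1 - x) ^ 2)⁻¹ (Ioo 0 1) x := by
    rintro x ⟨-, hx1⟩
    have h := (hasDerivAt_id x).div ((hasDerivAt_id x).const_sub 1) (sub_pos.2 hx1).ne'
    refine h.hasDerivWithinAt.congr_deriv ?_
    simp only [id_eq]
    ring
  have hinj : InjOn (fun x : ℝ => x / (1 - x)) (Ioo 0 1) := by
    rintro x ⟨-, hx1⟩ y ⟨-, hy1⟩ hxy
    have := (sub_pos.2 hx1).ne'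
    have := (sub_pos.2 hy1).ne'
    field_simp at hxy
    linarith
  rw [← himage, integral_image_eq_integral_abs_deriv_smul measurableSet_Ioo hderiv hinj]
  refine setIntegral_congr_fun measurableSet_Ioo fun x _ => ?_
  rw [abs_of_nonneg (by positivity)]

lemma integral_Ioi_rpow_mul_one_add_rpow {u v : ℝ} (hu : 0 < u) (hv : 0 < v) :
    ∫ t in Ioi 0, t ^ (u - 1) * (1 + t) ^ (-(u + v)) = ProbabilityTheory.beta u v := by
  rw [integral_Ioi_eq_integral_Ioo_div_one_sub, ← integral_rpow_mul_one_sub_rpow hu hv,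
    intervalIntegral.integral_of_le zero_le_one, integral_Ioc_eq_integral_Ioo]
  refine setIntegral_congr_fun measurableSet_Ioo fun x ⟨hx0, hx1⟩ => ?_
  have hy : 0 < 1 - x := sub_pos.2 hx1
  have hsum : (1 - x) ^ (u + v) = (1 - x) ^ (u - 1) * (1 - x) ^ (v - 1) * (1 - x) ^ 2 := by
    rw [← rpow_natCast, ← rpow_add hy, ← rpow_add hy]
    congr 1
    push_cast
    ring
  rw [show 1 + x / (1 - x) = (1 - x)⁻¹ by field_simp; ring, inv_rpow hy.le, rpow_neg hy.le,
    inv_inv, div_rpow hx0.le hy.le, hsum, smul_eq_mul]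
  have := (rpow_pos_of_pos hy (u - 1)).ne'
  field_simp

lemma integral_Ioi_rpow_mul_one_add_inv {a : ℝ} (ha0 : 0 < a) (ha1 : a < 1) :
    ∫ t in Ioi 0, t ^ (a - 1) * (1 + t)⁻¹ = π / sin (π * a) := by
  have h := integral_Ioi_rpow_mul_one_add_rpow ha0 (sub_pos.2 ha1)
  rw [add_sub_cancel, ProbabilityTheory.beta, add_sub_cancel, Real.Gamma_one, div_one,
    Real.Gamma_mul_Gamma_one_sub] at h
  rw [← h]
  refine setIntegral_congr_fun measurableSet_Ioi fun t _ => ?_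
  rw [rpow_neg_one]

lemma integral_Ioi_rpow_mul_add_inv {a s : ℝ} (ha0 : 0 < a) (ha1 : a < 1) (hs : 0 < s) :
    ∫ t in Ioi 0, t ^ (a - 1) * (s + t)⁻¹ = s ^ (a - 1) * (π / sin (π * a)) := by
  have h := integral_comp_mul_left_Ioi (fun t => t ^ (a - 1) * (s + t)⁻¹) 0 hs
  rw [mul_zero, smul_eq_mul, eq_inv_mul_iff_mul_eq₀ hs.ne'] at h
  rw [← h, ← integral_Ioi_rpow_mul_one_add_inv ha0 ha1, ← integral_const_mul,
    ← integral_const_mul]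
  refine setIntegral_congr_fun measurableSet_Ioi fun t (ht : 0 < t) => ?_
  rw [mul_rpow hs.le ht.le, ← mul_one_add, mul_inv, rpow_sub_one hs.ne']
  field_simp

lemma integral_Ioi_rpow_mul_add_rpow_inv {α β s : ℝ} (hβ : 0 < β) (hβα : β < α) (hs : 0 < s) :
    ∫ r in Ioi 0, r ^ (β - 1) * (s + r ^ α)⁻¹
      = s ^ (β / α - 1) * (π / sin (π * (β / α))) / α := by
  have hα : 0 < α := hβ.trans hβα
  have ha0 : 0 < β / α := div_pos hβ hα
  have ha1 : β / α < 1 := (div_lt_one hα).2 hβα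
  rw [← integral_Ioi_rpow_mul_add_inv ha0 ha1 hs,
    ← integral_comp_rpow_Ioi_of_pos (g := fun t => t ^ (β / α - 1) * (s + t)⁻¹) hα,
    eq_div_iff hα.ne', ← integral_mul_const]
  refine setIntegral_congr_fun measurableSet_Ioi fun r (hr : 0 < r) => ?_
  rw [smul_eq_mul, ← rpow_mul hr.le, mul_sub, mul_div_cancel₀ _ hα.ne', mul_one,
    rpow_sub hr, rpow_sub hr, rpow_one]
  field_simp
  rw [← rpow_add hr, add_sub_cancel]

theorem laplace_integral (α s : ℝ) (hα : 2 < α) (hs : 0 < s) :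
    ∫ r in Set.Ioi (0 : ℝ), 2 * π * r * (1 - 1 / (1 + s * r ^ (-α)))
      = s ^ (2 / α) * (2 * π ^ 2 * (Real.sin (2 * π / α))⁻¹ / α) := by
  have hintegrand : ∀ r ∈ Ioi (0 : ℝ), 2 * π * r * (1 - 1 / (1 + s * r ^ (-α)))
      = 2 * π * s * (r ^ ((2 : ℝ) - 1) * (s + r ^ α)⁻¹) := fun r (hr : 0 < r) => by
    have := (rpow_pos_of_pos hr α).ne'
    rw [rpow_neg hr.le, show (2 : ℝ) - 1 = 1 by norm_num, rpow_one]
    field_simp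
    ring
  rw [setIntegral_congr_fun measurableSet_Ioi hintegrand, integral_const_mul,
    integral_Ioi_rpow_mul_add_rpow_inv two_pos hα hs, rpow_sub_one hs.ne',
    show π * (2 / α) = 2 * π / α by ring]
  field_simp
end

section
/- Let K ≥ 1, and for i = 1,...,K let λ_i, P_i > 0 and T_i > 1. Define P_c = (π/C(α)) · (Σ_{i=1}^K λ_i P_i^{2/α} T_i^{−2/α}) / (Σ_{i=1}^K λ_i P_i^{2/α}), where C(α) = 2π² csc(2π/α)/α and α > 2. If T_i = T for all i, then P_c = π/(C(α) T^{2/α}), independent of K, the λ_i, and the P_i. -/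
open Real Finset

theorem Finset.sum_mul_const_div_sum {ι 𝕜 : Type*} [Field 𝕜] (s : Finset ι) (w : ι → 𝕜)
    (c : 𝕜) (hw : ∑ i ∈ s, w i ≠ 0) : (∑ i ∈ s, w i * c) / ∑ i ∈ s, w i = c := by
  rw [← Finset.sum_mul, mul_div_cancel_left₀ _ hw]

theorem coverage_equal_thresholds_general (K : ℕ) (hK : 1 ≤ K) (α : ℝ)
    (lam P T' : Fin K → ℝ) (hlam : ∀ i, 0 < lam i) (hP : ∀ i, 0 < P i)
    (hT1 : ∀ i, 1 < T' i) (T : ℝ) (hT : ∀ i, T' i = T) :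
    (π / (2 * π ^ 2 * (Real.sin (2 * π / α))⁻¹ / α)) *
        ((∑ i, lam i * P i ^ (2 / α) * T' i ^ (-(2 / α))) /
          (∑ i, lam i * P i ^ (2 / α)))
      = π / ((2 * π ^ 2 * (Real.sin (2 * π / α))⁻¹ / α) * T ^ (2 / α)) := by
  have i₀ : Fin K := ⟨0, hK⟩
  have hT₀ : 0 ≤ T := zero_le_one.trans (hT i₀ ▸ hT1 i₀).le
  have hS : ∑ i, lam i * P i ^ (2 / α) ≠ 0 :=
    (Finset.sum_pos (fun i _ => mul_pos (hlam i) (rpow_pos_of_pos (hP i) _))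
      ⟨i₀, mem_univ i₀⟩).ne'
  simp only [hT, rpow_neg hT₀, Finset.sum_mul_const_div_sum _ _ _ hS]
  rw [← div_eq_mul_inv, div_div]

theorem coverage_equal_thresholds (K : ℕ) (hK : 1 ≤ K) (α : ℝ) (hα : 2 < α)
    (lam P T' : Fin K → ℝ) (hlam : ∀ i, 0 < lam i) (hP : ∀ i, 0 < P i)
    (hT1 : ∀ i, 1 < T' i) (T : ℝ) (hT : ∀ i, T' i = T) :
    (π / (2 * π ^ 2 * (Real.sin (2 * π / α))⁻¹ / α)) *
        ((∑ i, lam i * P i ^ (2 / α) * T' i ^ (-(2 / α))) /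
          (∑ i, lam i * P i ^ (2 / α)))
      = π / ((2 * π ^ 2 * (Real.sin (2 * π / α))⁻¹ / α) * T ^ (2 / α)) :=
  coverage_equal_thresholds_general K hK α lam P T' hlam hP hT1 T hT
end

section
/- Fix α > 2, σ² > 0, T > 1, P > 0. The single-tier coverage probability with noise, P_c(λ) = λ ∫_{ℝ²} exp(−C(α) (T/P)^{2/α} λ P^{2/α} ‖x‖²) · exp(−(Tσ²/P) ‖x‖^α) dx, satisfies P_c(λ) < π/(C(α) T^{2/α}) for all λ > 0, and P_c(λ) → π/(C(α) T^{2/α}) as λ → ∞. -/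
/-!
Write `b = C(α) T^{2/α}` and `c = Tσ²/P`, so that `P_c(λ) = λ ∫ e^{-bλ‖x‖²} e^{-c‖x‖^α} dx`.
Since the noise factor is `< 1` away from the origin, `P_c(λ)` is strictly below
`λ ∫ e^{-bλ‖x‖²} dx = π / b`. Substituting `x = λ^{-1/2} y` turns `P_c(λ)` into
`∫ e^{-b‖y‖²} e^{-cλ^{-α/2}‖y‖^α} dy`, and dominated convergence (by the Gaussian) lets the
noise level `cλ^{-α/2}` go to `0`.
-/

open MeasureTheory Real Filter Topology Module

theorem exp_neg_mul_rpow_norm_le_one {E : Type*} [SeminormedAddCommGroup E] {t : ℝ} (ht : 0 ≤ t)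
    (α : ℝ) (x : E) : rexp (-(t * ‖x‖ ^ α)) ≤ 1 :=
  exp_le_one_iff.2 <| neg_nonpos.2 <| by positivity

theorem exp_neg_mul_rpow_norm_lt_one {E : Type*} [NormedAddCommGroup E] {t : ℝ} (ht : 0 < t)
    (α : ℝ) {x : E} (hx : x ≠ 0) : rexp (-(t * ‖x‖ ^ α)) < 1 :=
  exp_lt_one_iff.2 <| neg_neg_iff_pos.2 <| mul_pos ht <| rpow_pos_of_pos (norm_pos_iff.2 hx) α

section GaussianWithNoise

variable {V : Type*} [NormedAddCommGroup V] [InnerProductSpace ℝ V] [FiniteDimensional ℝ V]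
  [MeasurableSpace V] [BorelSpace V]

theorem integral_exp_neg_mul_sq_norm {a : ℝ} (ha : 0 < a) :
    ∫ x : V, rexp (-(a * ‖x‖ ^ 2)) = (π / a) ^ (finrank ℝ V / 2 : ℝ) := by
  simpa only [neg_mul] using GaussianFourier.integral_rexp_neg_mul_sq_norm (V := V) ha

theorem integrable_exp_neg_mul_sq_norm {a : ℝ} (ha : 0 < a) :
    Integrable fun x : V ↦ rexp (-(a * ‖x‖ ^ 2)) :=
  Integrable.of_integral_ne_zero <| by
    rw [integral_exp_neg_mul_sq_norm ha]; positivity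

theorem aestronglyMeasurable_exp_neg_mul_rpow_norm (t α : ℝ) :
    AEStronglyMeasurable (fun x : V ↦ rexp (-(t * ‖x‖ ^ α))) :=
  (by fun_prop : Measurable fun x : V ↦ rexp (-(t * ‖x‖ ^ α))).aestronglyMeasurable

theorem integrable_exp_neg_mul_sq_norm_mul_exp {a t : ℝ} (ha : 0 < a) (ht : 0 ≤ t) (α : ℝ) :
    Integrable fun x : V ↦ rexp (-(a * ‖x‖ ^ 2)) * rexp (-(t * ‖x‖ ^ α)) :=
  (integrable_exp_neg_mul_sq_norm ha).mul_bdd (aestronglyMeasurable_exp_neg_mul_rpow_norm t α) <|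
    Eventually.of_forall fun x ↦ by
      rw [norm_of_nonneg (exp_pos _).le]; exact exp_neg_mul_rpow_norm_le_one ht α x

theorem integral_exp_neg_mul_sq_norm_mul_exp_lt [Nontrivial V] {a t : ℝ} (ha : 0 < a) (ht : 0 < t)
    (α : ℝ) :
    ∫ x : V, rexp (-(a * ‖x‖ ^ 2)) * rexp (-(t * ‖x‖ ^ α)) < ∫ x : V, rexp (-(a * ‖x‖ ^ 2)) := by
  have hg := integrable_exp_neg_mul_sq_norm (V := V) ha
  have hf := integrable_exp_neg_mul_sq_norm_mul_exp (V := V) ha ht.le α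
  rw [← sub_pos, ← integral_sub hg hf]
  refine (integral_pos_iff_support_of_nonneg (fun x ↦ ?_) (hg.sub hf)).2 ?_
  · exact sub_nonneg.2 <| mul_le_of_le_one_right (exp_pos _).le
      (exp_neg_mul_rpow_norm_le_one ht.le α x)
  · refine (isOpen_compl_singleton.measure_pos volume (exists_ne (0 : V))).trans_le
      (measure_mono fun x hx ↦ ?_)
    exact sub_ne_zero.2 (mul_lt_of_lt_one_right (exp_pos _)
      (exp_neg_mul_rpow_norm_lt_one ht α hx)).ne'

theorem integral_exp_neg_mul_sq_norm_mul_exp_rescale {a t lam : ℝ} (hlam : 0 < lam) (α : ℝ) :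
    lam ^ (finrank ℝ V / 2 : ℝ) * ∫ x : V, rexp (-(a * lam * ‖x‖ ^ 2)) * rexp (-(t * ‖x‖ ^ α)) =
      ∫ x : V, rexp (-(a * ‖x‖ ^ 2)) * rexp (-(t * lam ^ (-(α / 2)) * ‖x‖ ^ α)) := by
  set R := lam ^ (-(1 / 2) : ℝ)
  have hR : 0 < R := rpow_pos_of_pos hlam _
  have hRsq : R ^ 2 * lam = 1 := by
    rw [← rpow_natCast, ← rpow_mul hlam.le, ← rpow_add_one hlam.ne']; norm_num
  have hRd : (R ^ finrank ℝ V)⁻¹ = lam ^ (finrank ℝ V / 2 : ℝ) := by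
    rw [← rpow_natCast, ← rpow_mul hlam.le, ← rpow_neg hlam.le]; ring_nf
  rw [← hRd, ← smul_eq_mul, ← Measure.integral_comp_smul_of_nonneg _ _ R (hR := hR.le)]
  congr 1 with x
  rw [norm_smul, norm_of_nonneg hR.le, mul_rpow hR.le (norm_nonneg x), ← rpow_mul hlam.le]
  congr 3
  · linear_combination (a * ‖x‖ ^ 2) * hRsq
  · ring_nf

theorem tendsto_integral_exp_neg_mul_sq_norm_mul_exp {a : ℝ} (ha : 0 < a) (α : ℝ) :
    Tendsto (fun t ↦ ∫ x : V, rexp (-(a * ‖x‖ ^ 2)) * rexp (-(t * ‖x‖ ^ α))) (𝓝[≥] 0)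
      (𝓝 (∫ x : V, rexp (-(a * ‖x‖ ^ 2)))) := by
  refine tendsto_integral_filter_of_dominated_convergence _
    (Eventually.of_forall fun t ↦ ((integrable_exp_neg_mul_sq_norm ha).aestronglyMeasurable.mul
      (aestronglyMeasurable_exp_neg_mul_rpow_norm t α)))
    ?_ (integrable_exp_neg_mul_sq_norm ha) (Eventually.of_forall fun x ↦ ?_)
  · filter_upwards [self_mem_nhdsWithin] with t (ht : 0 ≤ t)
    refine Eventually.of_forall fun x ↦ ?_
    rw [norm_of_nonneg (by positivity)]
    exact mul_le_of_le_one_right (exp_pos _).le (exp_neg_mul_rpow_norm_le_one ht α x)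
  · refine tendsto_nhdsWithin_of_tendsto_nhds ?_
    simpa using ((by fun_prop : Continuous fun t : ℝ ↦ rexp (-(t * ‖x‖ ^ α))).tendsto 0).const_mul
      (rexp (-(a * ‖x‖ ^ 2)))

theorem rpow_mul_integral_exp_neg_mul_sq_norm_mul_exp_lt [Nontrivial V] {a t lam : ℝ}
    (ha : 0 < a) (ht : 0 < t) (hlam : 0 < lam) (α : ℝ) :
    lam ^ (finrank ℝ V / 2 : ℝ) * ∫ x : V, rexp (-(a * lam * ‖x‖ ^ 2)) * rexp (-(t * ‖x‖ ^ α)) <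
      (π / a) ^ (finrank ℝ V / 2 : ℝ) := by
  have halam : 0 < a * lam := mul_pos ha hlam
  calc _ < lam ^ (finrank ℝ V / 2 : ℝ) * ∫ x : V, rexp (-(a * lam * ‖x‖ ^ 2)) :=
        mul_lt_mul_of_pos_left (integral_exp_neg_mul_sq_norm_mul_exp_lt halam ht α)
          (rpow_pos_of_pos hlam _)
    _ = (π / a) ^ (finrank ℝ V / 2 : ℝ) := by
        rw [integral_exp_neg_mul_sq_norm halam, ← mul_rpow hlam.le (by positivity)]
        field_simp

theorem tendsto_rpow_mul_integral_exp_neg_mul_sq_norm_mul_exp {a t α : ℝ} (ha : 0 < a)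
    (ht : 0 ≤ t) (hα : 0 < α) :
    Tendsto (fun lam ↦ lam ^ (finrank ℝ V / 2 : ℝ) *
        ∫ x : V, rexp (-(a * lam * ‖x‖ ^ 2)) * rexp (-(t * ‖x‖ ^ α))) atTop
      (𝓝 ((π / a) ^ (finrank ℝ V / 2 : ℝ))) := by
  have hnoise : Tendsto (fun lam : ℝ ↦ t * lam ^ (-(α / 2))) atTop (𝓝[≥] 0) :=
    tendsto_nhdsWithin_iff.2
      ⟨by simpa using (tendsto_rpow_neg_atTop (half_pos hα)).const_mul t,
        (eventually_ge_atTop 0).mono fun lam hlam ↦ Set.mem_Ici.2 (by positivity)⟩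
  rw [← integral_exp_neg_mul_sq_norm ha]
  refine ((tendsto_integral_exp_neg_mul_sq_norm_mul_exp ha α).comp hnoise).congr' ?_
  filter_upwards [eventually_gt_atTop 0] with lam hlam
  exact (integral_exp_neg_mul_sq_norm_mul_exp_rescale hlam α).symm

end GaussianWithNoise

theorem two_mul_pi_sq_mul_inv_sin_div_pos {α : ℝ} (hα : 2 < α) :
    0 < 2 * π ^ 2 * (sin (2 * π / α))⁻¹ / α := by
  have hα0 : 0 < α := by linarith
  have : 0 < sin (2 * π / α) :=
    sin_pos_of_pos_of_lt_pi (by positivity) (by rw [div_lt_iff₀ hα0]; nlinarith [pi_pos])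
  positivity

theorem single_tier_coverage_with_noise (α σ2 T P : ℝ)
    (hα : 2 < α) (hσ : 0 < σ2) (hT : 1 < T) (hP : 0 < P)
    (Pc : ℝ → ℝ)
    (hPc : ∀ lam : ℝ, Pc lam = lam *
      ∫ x : EuclideanSpace ℝ (Fin 2),
        Real.exp (-((2 * π ^ 2 * (Real.sin (2 * π / α))⁻¹ / α) *
            (T / P) ^ (2 / α) * lam * P ^ (2 / α) * ‖x‖ ^ 2)) *
          Real.exp (-(T * σ2 / P * ‖x‖ ^ α))) :
    (∀ lam : ℝ, 0 < lam →
      Pc lam < π / ((2 * π ^ 2 * (Real.sin (2 * π / α))⁻¹ / α) * T ^ (2 / α))) ∧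
    Filter.Tendsto Pc Filter.atTop
      (nhds (π / ((2 * π ^ 2 * (Real.sin (2 * π / α))⁻¹ / α) * T ^ (2 / α)))) := by
  set C := 2 * π ^ 2 * (sin (2 * π / α))⁻¹ / α
  have hb : 0 < C * T ^ (2 / α) :=
    mul_pos (two_mul_pi_sq_mul_inv_sin_div_pos hα) (rpow_pos_of_pos (by linarith) _)
  have hdim : (finrank ℝ (EuclideanSpace ℝ (Fin 2)) / 2 : ℝ) = 1 := by simp
  have hPc' : Pc = fun lam ↦ lam ^ (finrank ℝ (EuclideanSpace ℝ (Fin 2)) / 2 : ℝ) *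
      ∫ x : EuclideanSpace ℝ (Fin 2),
        rexp (-(C * T ^ (2 / α) * lam * ‖x‖ ^ 2)) * rexp (-(T * σ2 / P * ‖x‖ ^ α)) := by
    ext lam
    have : P ^ (2 / α) ≠ 0 := (rpow_pos_of_pos hP _).ne'
    rw [hPc, hdim, rpow_one, div_rpow (by linarith) hP.le]
    congr 4 with x
    field_simp
  have hlimit : π / (C * T ^ (2 / α)) =
      (π / (C * T ^ (2 / α))) ^ (finrank ℝ (EuclideanSpace ℝ (Fin 2)) / 2 : ℝ) := by
    rw [hdim, rpow_one]
  rw [hPc', hlimit]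
  exact ⟨fun lam hlam ↦ rpow_mul_integral_exp_neg_mul_sq_norm_mul_exp_lt hb (by positivity) hlam α,
    tendsto_rpow_mul_integral_exp_neg_mul_sq_norm_mul_exp hb (by positivity) (by linarith)⟩
end

section
/- Let α > 2, T ≥ 1. Then the function T ↦ log(1+T) + T^{2/α} ∫_T^∞ x^{−2/α}/(1+x) dx is strictly increasing in T on [1, ∞). -/
/-!
Write `δ = 2 / α`, `G T = ∫_T^∞ x^(-δ) / (1 + x) dx` and `F T = log (1 + T) + T^δ G T`. For `0 < S < T`, splitting
`G S = ∫_S^T x^(-δ) / (1 + x) dx + G T` gives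
`F T - F S = (∫_S^T (1 + x)⁻¹ dx - S^δ ∫_S^T x^(-δ) / (1 + x) dx) + (T^δ - S^δ) G T`.
The bracket is nonnegative since `S^δ x^(-δ) ≤ 1` for `x ≥ S`, and the last term is positive.
-/

open MeasureTheory Real Set

lemma continuousOn_rpow_neg_div_one_add (δ : ℝ) :
    ContinuousOn (fun x : ℝ => x ^ (-δ) / (1 + x)) (Ioi 0) :=
  (continuousOn_id.rpow_const fun x hx => Or.inl (ne_of_gt hx)).div (by fun_prop)
    fun x (hx : 0 < x) => by positivity

lemma integrableOn_rpow_neg_div_one_add_Ioi {δ S : ℝ} (hδ : 0 < δ) (hS : 0 < S) :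
    IntegrableOn (fun x : ℝ => x ^ (-δ) / (1 + x)) (Ioi S) := by
  refine (integrableOn_Ioi_rpow_of_lt (by linarith : -δ - 1 < -1) hS).mono' ?_ ?_
  · exact ((continuousOn_rpow_neg_div_one_add δ).mono (Ioi_subset_Ioi hS.le)).aestronglyMeasurable
      measurableSet_Ioi
  · filter_upwards [ae_restrict_mem measurableSet_Ioi] with x (hx : S < x)
    have hx0 : 0 < x := hS.trans hx
    rw [norm_of_nonneg (by positivity), rpow_sub hx0, rpow_one]
    exact div_le_div_of_nonneg_left (by positivity) hx0 (by linarith)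

lemma setIntegral_rpow_neg_div_one_add_Ioi_pos {δ T : ℝ} (hδ : 0 < δ) (hT : 0 < T) :
    0 < ∫ x in Ioi T, x ^ (-δ) / (1 + x) := by
  have hpos : ∀ x ∈ Ioi T, 0 < x ^ (-δ) / (1 + x) := fun x hx => by
    have hx0 : 0 < x := hT.trans hx
    positivity
  rw [setIntegral_pos_iff_support_of_nonneg_ae
    ((ae_restrict_iff' measurableSet_Ioi).2 (.of_forall fun x hx => (hpos x hx).le))
    (integrableOn_rpow_neg_div_one_add_Ioi hδ hT),
    inter_eq_right.2 fun x hx => Function.mem_support.2 (hpos x hx).ne']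
  simp

lemma integral_inv_one_add {a b : ℝ} (ha : -1 < a) (hb : -1 < b) :
    ∫ x in a..b, (1 + x)⁻¹ = log (1 + b) - log (1 + a) := by
  rw [intervalIntegral.integral_comp_add_left (fun x => x⁻¹), integral_inv, log_div]
  exacts [by linarith, by linarith, notMem_uIcc_of_lt (by linarith) (by linarith)]

lemma rpow_mul_integral_rpow_neg_div_one_add_le {δ S T : ℝ} (hδ : 0 ≤ δ) (hS : 0 < S)
    (hST : S ≤ T) :
    S ^ δ * ∫ x in S..T, x ^ (-δ) / (1 + x) ≤ ∫ x in S..T, (1 + x)⁻¹ := by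
  have hpos : uIcc S T ⊆ Ioi 0 := fun x hx => hS.trans_le (uIcc_of_le hST ▸ hx).1
  rw [← intervalIntegral.integral_const_mul]
  refine intervalIntegral.integral_mono_on hST
    (((continuousOn_rpow_neg_div_one_add δ).mono hpos).intervalIntegrable.const_mul _)
    (ContinuousOn.intervalIntegrable ?_) fun x ⟨hSx, _⟩ => ?_
  · exact ContinuousOn.inv₀ (by fun_prop) fun x hx => (add_pos one_pos (hpos hx)).ne'
  have hx0 : 0 < x := hS.trans_le hSx
  have : S ^ δ * x ^ (-δ) ≤ 1 := by
    rw [rpow_neg hx0.le, mul_inv_le_iff₀ (by positivity), one_mul]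
    exact rpow_le_rpow hS.le hSx hδ
  rw [mul_div_assoc', div_eq_mul_inv]
  exact mul_le_of_le_one_left (by positivity) this

theorem strictMonoOn_log_one_add_add_rpow_mul_integral {δ : ℝ} (hδ : 0 < δ) :
    StrictMonoOn (fun T : ℝ => log (1 + T) + T ^ δ * ∫ x in Ioi T, x ^ (-δ) / (1 + x))
      (Ioi 0) := by
  intro S (hS : 0 < S) T (hT : 0 < T) hST
  set G : ℝ → ℝ := fun U => ∫ x in Ioi U, x ^ (-δ) / (1 + x)
  have hsplit : G S = (∫ x in S..T, x ^ (-δ) / (1 + x)) + G T :=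
    (intervalIntegral.integral_interval_add_Ioi (integrableOn_rpow_neg_div_one_add_Ioi hδ hS)
      (integrableOn_rpow_neg_div_one_add_Ioi hδ hT)).symm
  have hlog := integral_inv_one_add (by linarith : (-1 : ℝ) < S) (by linarith : (-1 : ℝ) < T)
  have hmiddle := rpow_mul_integral_rpow_neg_div_one_add_le hδ.le hS hST.le
  have htail : S ^ δ * G T < T ^ δ * G T :=
    mul_lt_mul_of_pos_right (rpow_lt_rpow hS.le hST hδ)
      (setIntegral_rpow_neg_div_one_add_Ioi_pos hδ hT)
  change log (1 + S) + S ^ δ * G S < log (1 + T) + T ^ δ * G T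
  rw [hsplit, mul_add]
  linarith

theorem average_rate_monotone (α : ℝ) (hα : 2 < α) :
    StrictMonoOn
      (fun T : ℝ => Real.log (1 + T) +
        T ^ (2 / α) * ∫ x in Set.Ioi T, x ^ (-(2 / α)) / (1 + x))
      (Set.Ici 1) :=
  (strictMonoOn_log_one_add_add_rpow_mul_integral (div_pos two_pos (by linarith))).mono
    (Ici_subset_Ioi.2 one_pos)
end
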